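/- arXiv:2011.10969 — 3 statements merged into one kernel-verified Lean document; each statement's English description precedes it below -/
import Mathlib

section
/- Measure-theoretic covering lemma (Lemma 4.1). Let n ∈ {2,3,…}, 0 < ε < 1, and let B_R be a ball of radius R in ℝⁿ. Let E ⊂ F ⊂ B_R be Lebesgue measurable sets with the following properties: (1) |E| < ε |B_R|; and (2) for all x ∈ B_R and ρ ∈ (0,R], if |E ∩ B_ρ(x)| ≥ ε |B_ρ(x)| then B_ρ(x) ∩ B_R ⊂ F. Then there exists a constant C = C(n) > 0, independent of ε, R, E and F, such that |E| ≤ C ε |F|. -/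
open MeasureTheory Metric Set

noncomputable section

/-- Euclidean space `ℝⁿ`. -/
abbrev Euc (n : ℕ) := EuclideanSpace ℝ (Fin n)

/-- Inner ball lemma: a ball of radius `σ ≤ R` centered inside `ball x₀ R` contains, together
with `ball x₀ R`, a ball of radius `σ / 2`. -/
lemma exists_inner_ball {V : Type*} [NormedAddCommGroup V] [NormedSpace ℝ V]
    {x₀ x : V} {R σ : ℝ} (hx : x ∈ ball x₀ R) (hσ : 0 < σ) (hσR : σ ≤ R) :
    ∃ y, ball y (σ / 2) ⊆ ball x σ ∩ ball x₀ R := by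
  rw [mem_ball] at hx
  by_cases hcase : dist x x₀ ≤ R - σ / 2
  · refine ⟨x, fun z hz => ⟨?_, ?_⟩⟩
    · rw [mem_ball] at hz ⊢; linarith
    · rw [mem_ball] at hz ⊢
      calc dist z x₀ ≤ dist z x + dist x x₀ := dist_triangle _ _ _
        _ < σ / 2 + (R - σ / 2) := by linarith
        _ = R := by ring
  · push_neg at hcase
    set d := dist x x₀ with hd
    have hd2 : σ / 2 < d := by linarith
    have hdpos : 0 < d := by linarith
    set t := σ / (2 * d) with ht
    have ht0 : 0 < t := by positivity
    have htd : t * d = σ / 2 := by rw [ht]; field_simp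
    have hnxx : ‖x₀ - x‖ = d := by rw [← dist_eq_norm, dist_comm]
    have hyx : dist (x + t • (x₀ - x)) x = σ / 2 := by
      rw [dist_eq_norm, add_sub_cancel_left, norm_smul, Real.norm_of_nonneg ht0.le, hnxx, htd]
    have hyx₀ : dist (x + t • (x₀ - x)) x₀ = d - σ / 2 := by
      have hvec : x + t • (x₀ - x) - x₀ = (1 - t) • (x - x₀) := by
        module
      have ht1 : t ≤ 1 := by
        rw [ht, div_le_one (by positivity)]; linarith
      rw [dist_eq_norm, hvec, norm_smul, Real.norm_of_nonneg (by linarith),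
        ← dist_eq_norm, ← hd, sub_mul, one_mul, htd]
    refine ⟨x + t • (x₀ - x), fun z hz => ⟨?_, ?_⟩⟩
    · rw [mem_ball] at hz ⊢
      calc dist z x ≤ dist z (x + t • (x₀ - x)) + dist (x + t • (x₀ - x)) x := dist_triangle _ _ _
        _ < σ / 2 + σ / 2 := by rw [hyx]; linarith
        _ = σ := by ring
    · rw [mem_ball] at hz ⊢
      calc dist z x₀ ≤ dist z (x + t • (x₀ - x)) + dist (x + t • (x₀ - x)) x₀ := dist_triangle _ _ _
        _ < σ / 2 + (d - σ / 2) := by rw [hyx₀]; linarith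
        _ = d := by ring
        _ < R := hx

/-- **Lemma 4.1** (measure-theoretic covering lemma). -/
theorem covering_lemma (n : ℕ) (hn : 2 ≤ n) :
    ∃ C > (0 : ℝ), ∀ ε R : ℝ, 0 < ε → ε < 1 → 0 < R →
      ∀ (x₀ : Euc n) (E F : Set (Euc n)),
        MeasurableSet E → MeasurableSet F → E ⊆ F → F ⊆ ball x₀ R →
        volume E < ENNReal.ofReal ε * volume (ball x₀ R) →
        (∀ x ∈ ball x₀ R, ∀ ρ ∈ Ioc (0 : ℝ) R,
          ENNReal.ofReal ε * volume (ball x ρ) ≤ volume (E ∩ ball x ρ) →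
          ball x ρ ∩ ball x₀ R ⊆ F) →
        volume E ≤ ENNReal.ofReal (C * ε) * volume F := by
  classical
  refine ⟨10 ^ n, by positivity, ?_⟩
  intro ε R hε hε1 hR x₀ E F hE hF hEF hFB hEsmall hyp
  haveI : Nonempty (Fin n) := ⟨⟨0, by omega⟩⟩
  set μ := (volume : Measure (Euc n)) with hμdef
  have hfr : Module.finrank ℝ (Euc n) = n := finrank_euclideanSpace_fin
  -- measure of closed ball equals measure of open ball; spheres are null
  have hsph : ∀ (x : Euc n) (r : ℝ), μ (E ∩ closedBall x r) = μ (E ∩ ball x r) := by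
    intro x r
    refine le_antisymm ?_ (measure_mono (inter_subset_inter_right _ ball_subset_closedBall))
    calc μ (E ∩ closedBall x r) ≤ μ ((E ∩ ball x r) ∪ sphere x r) := by
          refine measure_mono ?_
          rw [← ball_union_sphere]
          rintro z ⟨hzE, hz⟩
          rcases hz with h | h
          · exact Or.inl ⟨hzE, h⟩
          · exact Or.inr h
      _ ≤ μ (E ∩ ball x r) + μ (sphere x r) := measure_union_le _ _
      _ = μ (E ∩ ball x r) := by rw [Measure.addHaar_sphere, add_zero]
  -- density points
  have hε1' : ENNReal.ofReal ε < 1 := ENNReal.ofReal_lt_one.2 hε1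
  have hae : ∀ᵐ x ∂μ.restrict E, ∃ ρ ∈ Ioc (0:ℝ) R,
      ENNReal.ofReal ε * μ (closedBall x ρ) ≤ μ (E ∩ closedBall x ρ) := by
    filter_upwards [Besicovitch.ae_tendsto_measure_inter_div μ E] with x hx
    have h1 : ∀ᶠ r in nhdsWithin (0:ℝ) (Ioi 0),
        ENNReal.ofReal ε < μ (E ∩ closedBall x r) / μ (closedBall x r) :=
      hx.eventually (eventually_gt_nhds hε1')
    have h2 : ∀ᶠ r in nhdsWithin (0:ℝ) (Ioi 0), r ∈ Ioc (0:ℝ) R := by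
      filter_upwards [Ioo_mem_nhdsGT_of_mem (⟨le_rfl, hR⟩ : (0:ℝ) ∈ Ico 0 R)] with r hr
      exact ⟨hr.1, hr.2.le⟩
    rcases (h1.and h2).exists with ⟨r, hr1, hr2⟩
    refine ⟨r, hr2, ?_⟩
    have hb0 : μ (closedBall x r) ≠ 0 := (measure_closedBall_pos μ x hr2.1).ne'
    have hbt : μ (closedBall x r) ≠ ⊤ := measure_closedBall_lt_top.ne
    exact (ENNReal.le_div_iff_mul_le (Or.inl hb0) (Or.inl hbt)).1 hr1.le
  set P : Euc n → Prop := fun x => ∃ ρ ∈ Ioc (0:ℝ) R,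
      ENNReal.ofReal ε * μ (closedBall x ρ) ≤ μ (E ∩ closedBall x ρ) with hPdef
  set E' : Set (Euc n) := E ∩ {x | P x} with hE'def
  have hEE' : μ E ≤ μ E' := by
    have h0 : μ ({x | ¬ P x} ∩ E) = 0 := by
      have := ae_iff.mp hae
      rwa [Measure.restrict_apply' hE] at this
    calc μ E ≤ μ (E' ∪ ({x | ¬ P x} ∩ E)) := by
          refine measure_mono fun x hx => ?_
          by_cases h : P x
          · exact Or.inl ⟨hx, h⟩
          · exact Or.inr ⟨h, hx⟩
      _ ≤ μ E' + μ ({x | ¬ P x} ∩ E) := measure_union_le _ _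
      _ = μ E' := by rw [h0, add_zero]
  -- the family of good radii
  set S : Euc n → Set ℝ := fun x =>
    {ρ | ρ ∈ Ioc (0:ℝ) R ∧ ENNReal.ofReal ε * μ (closedBall x ρ) ≤ μ (E ∩ closedBall x ρ)}
    with hSdef
  have hbdd : ∀ x, BddAbove (S x) := fun x => ⟨R, fun ρ hρ => hρ.1.2⟩
  have hchoice : ∀ x ∈ E', ∃ σ, σ ∈ S x ∧ sSup (S x) < 2 * σ := by
    intro x hx
    obtain ⟨ρ₀, hρ₀I, hρ₀c⟩ := hx.2
    have hρ₀S : ρ₀ ∈ S x := ⟨hρ₀I, hρ₀c⟩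
    have hne : (S x).Nonempty := ⟨ρ₀, hρ₀S⟩
    have hpos : 0 < sSup (S x) := lt_of_lt_of_le hρ₀I.1 (le_csSup (hbdd x) hρ₀S)
    obtain ⟨σ, hσS, hσgt⟩ := exists_lt_of_lt_csSup hne (by linarith : sSup (S x) / 2 < sSup (S x))
    exact ⟨σ, hσS, by linarith⟩
  set σf : Euc n → ℝ := fun x => if hx : x ∈ E' then (hchoice x hx).choose else 0 with hσfdef
  have hσmem : ∀ x (hx : x ∈ E'), σf x ∈ S x ∧ sSup (S x) < 2 * σf x := by
    intro x hx
    simp only [hσfdef, dif_pos hx]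
    exact (hchoice x hx).choose_spec
  have hσpos : ∀ x ∈ E', 0 < σf x := fun x hx => (hσmem x hx).1.1.1
  have hσleR : ∀ x ∈ E', σf x ≤ R := fun x hx => (hσmem x hx).1.1.2
  -- the key upper bound on 5-times enlarged balls
  have key5 : ∀ x ∈ E', μ (E ∩ closedBall x (5 * σf x)) ≤
      ENNReal.ofReal ε * μ (closedBall x (5 * σf x)) := by
    intro x hx
    have h1 := hσmem x hx
    have hs0 : 0 < σf x := h1.1.1.1
    by_cases h5 : 5 * σf x ≤ R
    · have hsle : σf x ≤ sSup (S x) := le_csSup (hbdd x) h1.1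
      have hnot : 5 * σf x ∉ S x := by
        intro hmem
        have := le_csSup (hbdd x) hmem
        linarith [h1.2]
      have : ¬ (ENNReal.ofReal ε * μ (closedBall x (5 * σf x)) ≤
          μ (E ∩ closedBall x (5 * σf x))) := fun hc => hnot ⟨⟨by linarith, h5⟩, hc⟩
      exact le_of_not_ge this
    · push_neg at h5
      calc μ (E ∩ closedBall x (5 * σf x)) ≤ μ E := measure_mono inter_subset_left
        _ ≤ ENNReal.ofReal ε * μ (ball x₀ R) := hEsmall.le
        _ ≤ ENNReal.ofReal ε * μ (closedBall x (5 * σf x)) := by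
            rw [Measure.addHaar_ball μ x₀ hR.le, Measure.addHaar_closedBall μ x (by positivity),
              hfr]
            have : ENNReal.ofReal (R ^ n) ≤ ENNReal.ofReal ((5 * σf x) ^ n) :=
              ENNReal.ofReal_le_ofReal (pow_le_pow_left₀ hR.le h5.le n)
            gcongr
  -- the covering hypothesis applies at radius σf x
  have hypF : ∀ x ∈ E', ball x (σf x) ∩ ball x₀ R ⊆ F := by
    intro x hx
    have h1 := (hσmem x hx).1
    refine hyp x (hFB (hEF hx.1)) (σf x) h1.1 ?_
    calc ENNReal.ofReal ε * μ (ball x (σf x))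
        ≤ ENNReal.ofReal ε * μ (closedBall x (σf x)) := by
          gcongr
          exact ball_subset_closedBall
      _ ≤ μ (E ∩ closedBall x (σf x)) := h1.2
      _ = μ (E ∩ ball x (σf x)) := hsph x (σf x)
  -- Vitali covering
  obtain ⟨u, huE', hdisj, hcov⟩ :=
    Vitali.exists_disjoint_subfamily_covering_enlargement_closedBall E' id σf R
      (fun a ha => hσleR a ha) 5 (by norm_num)
  simp only [id_eq] at hdisj hcov
  -- countability of u
  have hcnt : u.Countable := by
    have hdisj' : Pairwise (Function.onFun Disjoint
        (fun i : ↥u => closedBall (i : Euc n) (σf i))) := by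
      intro i j hij
      exact hdisj i.2 j.2 (Subtype.coe_injective.ne hij)
    have hcnt2 := Measure.countable_meas_pos_of_disjoint_iUnion (μ := μ)
      (As := fun i : ↥u => closedBall (i : Euc n) (σf i))
      (fun i => measurableSet_closedBall) hdisj'
    have huniv : {i : ↥u | 0 < μ (closedBall (i : Euc n) (σf i))} = univ :=
      eq_univ_of_forall fun i => measure_closedBall_pos μ _ (hσpos i (huE' i.2))
    rw [huniv, countable_univ_iff] at hcnt2
    exact countable_coe_iff.mp hcnt2
  -- the enlarged balls cover E'
  have hcov' : E' ⊆ ⋃ b ∈ u, closedBall b (5 * σf b) := by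
    intro a ha
    obtain ⟨b, hbu, hball⟩ := hcov a ha
    exact mem_biUnion hbu (hball (mem_closedBall_self (hσpos a ha).le))
  -- choice of inner balls inside F
  have hy : ∀ b ∈ u, ∃ y, ball y (σf b / 2) ⊆ closedBall b (σf b) ∧
      ball y (σf b / 2) ⊆ F := by
    intro b hb
    have hbE' := huE' hb
    obtain ⟨y, hysub⟩ := exists_inner_ball (hFB (hEF hbE'.1)) (hσpos b hbE') (hσleR b hbE')
    exact ⟨y, fun z hz => ball_subset_closedBall (hysub hz).1,
      fun z hz => hypF b hbE' (hysub hz)⟩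
  set yf : Euc n → Euc n := fun b => if hb : b ∈ u then (hy b hb).choose else b with hyfdef
  have hyf : ∀ b (hb : b ∈ u), ball (yf b) (σf b / 2) ⊆ closedBall b (σf b) ∧
      ball (yf b) (σf b / 2) ⊆ F := by
    intro b hb
    simp only [hyfdef, dif_pos hb]
    exact (hy b hb).choose_spec
  have hdisj2 : u.PairwiseDisjoint (fun b => ball (yf b) (σf b / 2)) := by
    intro i hi j hj hij
    exact (hdisj hi hj hij).mono (hyf i hi).1 (hyf j hj).1
  -- final computation
  calc μ E ≤ μ E' := hEE'
    _ ≤ μ (⋃ b ∈ u, E ∩ closedBall b (5 * σf b)) := by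
        refine measure_mono fun a ha => ?_
        obtain ⟨b, hbu, hball⟩ := mem_iUnion₂.1 (hcov' ha)
        exact mem_biUnion hbu ⟨ha.1, hball⟩
    _ ≤ ∑' b : ↥u, μ (E ∩ closedBall (b : Euc n) (5 * σf b)) := measure_biUnion_le μ hcnt _
    _ ≤ ∑' b : ↥u, ENNReal.ofReal ε * μ (closedBall (b : Euc n) (5 * σf b)) :=
        ENNReal.tsum_le_tsum fun b => key5 b (huE' b.2)
    _ = ∑' b : ↥u, ENNReal.ofReal ((10:ℝ) ^ n * ε) * μ (ball (yf b) (σf b / 2)) := by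
        refine tsum_congr fun b => ?_
        have hs0 : 0 < σf b := hσpos b (huE' b.2)
        rw [Measure.addHaar_closedBall μ _ (by positivity : (0:ℝ) ≤ 5 * σf b),
          Measure.addHaar_ball μ _ (by positivity : (0:ℝ) ≤ σf b / 2), hfr,
          ← mul_assoc, ← mul_assoc, ← ENNReal.ofReal_mul hε.le,
          ← ENNReal.ofReal_mul (by positivity : (0:ℝ) ≤ (10:ℝ) ^ n * ε)]
        congr 2
        rw [show (5:ℝ) * σf b = 10 * (σf b / 2) by ring, mul_pow]
        ring
    _ = ENNReal.ofReal ((10:ℝ) ^ n * ε) * ∑' b : ↥u, μ (ball (yf b) (σf b / 2)) :=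
        ENNReal.tsum_mul_left
    _ = ENNReal.ofReal ((10:ℝ) ^ n * ε) * μ (⋃ b ∈ u, ball (yf b) (σf b / 2)) := by
        rw [measure_biUnion hcnt hdisj2 fun b hb => measurableSet_ball]
    _ ≤ ENNReal.ofReal ((10:ℝ) ^ n * ε) * μ F := by
        gcongr
        exact iUnion₂_subset fun b hb => (hyf b hb).2
end
end

section
/- Pointwise decomposition inequality for the singular range (used in the proof of Lemma 3.1). Let 1 < p < 2 and n ∈ {1,2,…}. There exists a constant C = C(p) > 0 such that for all vectors X, Y ∈ ℝⁿ with X ≠ Y: |X − Y|^p ≤ C (|X| + |Y|)^{p−2} |X − Y|² + C (|X| + |Y|)^{p(p−2)/2} |X − Y|^p |X|^{p(2−p)/2}. -/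
noncomputable section

/-! Since `‖X‖ + ‖Y‖ ≤ ‖X - Y‖ + 2‖X‖`, it suffices to bound `‖X - Y‖ ^ p ‖X - Y‖` and
`‖X - Y‖ ^ p ‖X‖` separately. Both follow from interpolating `x ≤ x ^ a s ^ (1 - a)` for
`0 ≤ x ≤ s` and `a ≤ 1`, taken with `x = ‖X - Y‖, a = 2 - p` and with `x = ‖X‖, a = p(2 - p)/2`,
where `s = ‖X‖ + ‖Y‖`. -/

open Real

lemma le_rpow_mul_rpow_one_sub {x s a : ℝ} (hx : 0 ≤ x) (hxs : x ≤ s) (ha : a ≤ 1) :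
    x ≤ x ^ a * s ^ (1 - a) := by
  rcases hx.eq_or_lt with rfl | hx
  · exact mul_nonneg (rpow_nonneg le_rfl a) (rpow_nonneg hxs (1 - a))
  · calc x = x ^ a * x ^ (1 - a) := by rw [← rpow_add hx]; norm_num
      _ ≤ x ^ a * s ^ (1 - a) := by gcongr

lemma rpow_le_rpow_sub_two_mul_sq_add {p a d x s : ℝ} (hp : 1 ≤ p) (ha : a ≤ 1)
    (hd : 0 < d) (hds : d ≤ s) (hx : 0 ≤ x) (hxs : x ≤ s) (hs : s ≤ d + 2 * x) :
    d ^ p ≤ s ^ (p - 2) * d ^ 2 + 2 * s ^ (-a) * d ^ p * x ^ a := by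
  have hs0 : 0 < s := hd.trans_le hds
  have hd_le : d ^ p * d ≤ s ^ (p - 2) * d ^ 2 * s := by
    calc d ^ p * d ≤ d ^ p * (d ^ (2 - p) * s ^ (1 - (2 - p))) := by
          gcongr; exact le_rpow_mul_rpow_one_sub hd.le hds (by linarith)
      _ = s ^ (p - 2) * d ^ 2 * s := by
          rw [← mul_assoc, ← rpow_add hd, show 1 - (2 - p) = p - 2 + 1 by ring,
            rpow_add_one hs0.ne']
          norm_num
          ring
  have hx_le : d ^ p * x ≤ s ^ (-a) * d ^ p * x ^ a * s := by
    calc d ^ p * x ≤ d ^ p * (x ^ a * s ^ (1 - a)) := by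
          gcongr; exact le_rpow_mul_rpow_one_sub hx hxs ha
      _ = s ^ (-a) * d ^ p * x ^ a * s := by
          rw [show 1 - a = -a + 1 by ring, rpow_add_one hs0.ne']
          ring
  rw [← mul_le_mul_iff_left₀ hs0]
  calc d ^ p * s ≤ d ^ p * (d + 2 * x) := by gcongr
    _ = d ^ p * d + 2 * (d ^ p * x) := by ring
    _ ≤ (s ^ (p - 2) * d ^ 2 + 2 * s ^ (-a) * d ^ p * x ^ a) * s := by linarith

theorem pointwise_decomposition_general (p : ℝ) (hp1 : 1 < p) :
    ∃ C > (0 : ℝ), ∀ n : ℕ, 1 ≤ n → ∀ X Y : Euc n, X ≠ Y →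
      ‖X - Y‖ ^ p ≤
        C * (‖X‖ + ‖Y‖) ^ (p - 2) * ‖X - Y‖ ^ 2
          + C * (‖X‖ + ‖Y‖) ^ (p * (p - 2) / 2) * ‖X - Y‖ ^ p * ‖X‖ ^ (p * (2 - p) / 2) := by
  refine ⟨2, two_pos, fun n _ X Y hXY => ?_⟩
  have ha : p * (2 - p) / 2 ≤ 1 := by nlinarith [sq_nonneg (p - 1)]
  have hs : ‖X‖ + ‖Y‖ ≤ ‖X - Y‖ + 2 * ‖X‖ := by
    linarith [norm_sub_norm_le Y X, norm_sub_rev X Y]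
  have key := rpow_le_rpow_sub_two_mul_sq_add hp1.le ha (norm_sub_pos_iff.mpr hXY)
    (norm_sub_le X Y) (norm_nonneg X) (le_add_of_nonneg_right (norm_nonneg Y)) hs
  have hfirst : 0 ≤ (‖X‖ + ‖Y‖) ^ (p - 2) * ‖X - Y‖ ^ 2 := by positivity
  rw [show p * (p - 2) / 2 = -(p * (2 - p) / 2) by ring]
  linarith

/-- Pointwise decomposition inequality for the singular range `1 < p < 2`,
used in the proof of Lemma 3.1. The constant `C` depends only on `p`. -/
theorem pointwise_decomposition (p : ℝ) (hp1 : 1 < p) (hp2 : p < 2) :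
    ∃ C > (0 : ℝ), ∀ n : ℕ, 1 ≤ n → ∀ X Y : Euc n, X ≠ Y →
      ‖X - Y‖ ^ p ≤
        C * (‖X‖ + ‖Y‖) ^ (p - 2) * ‖X - Y‖ ^ 2
          + C * (‖X‖ + ‖Y‖) ^ (p * (p - 2) / 2) * ‖X - Y‖ ^ p * ‖X‖ ^ (p * (2 - p) / 2) :=
  pointwise_decomposition_general p hp1
end
end

section
/- Integral interpolation inequality (equation (3.5) in the proof of Lemma 3.1). Let 1 < p < 2, n ∈ {2,3,…}, and let B ⊂ ℝⁿ be a ball. Let X, Y : B → ℝⁿ be measurable with ∫_B |X|^p dx < ∞ and ∫_B |Y|^p dx < ∞, and adopt the convention that (|X|+|Y|)^{p−2}|X−Y|² := 0 at points where X = Y = 0. Then there exists C = C(p) > 0 such that ⨍_B |X − Y|^p dx ≤ C ⨍_B (|X| + |Y|)^{p−2} |X − Y|² dx + C ( ⨍_B (|X| + |Y|)^{p−2} |X − Y|² dx )^{p/2} ( ⨍_B |X|^p dx )^{(2−p)/2}. -/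
open MeasureTheory Metric Set

noncomputable section

/-!
Write `a = |X| + |Y|` and `t = |X - Y| ≤ a`. Pointwise
`t^p = (a^(p-2) t²)^(p/2) (a^p)^((2-p)/2)`, so Hölder's inequality with weights
`p/2 + (2-p)/2 = 1` gives `A ≤ G^(p/2) T^((2-p)/2)` for the integrals `A, G, T` of `t^p`,
`a^(p-2) t²`, `a^p`. As `a ≤ 2|X| + t`, `T ≲ S + A` with `S = ∫ |X|^p`. By subadditivity of
`s ↦ s^((2-p)/2)`, either `A ≲ G^(p/2) S^((2-p)/2)`, or `A ≲ G^(p/2) A^((2-p)/2)`, that is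
`A ≲ G`. None of this depends on the measure, and an average is an integral against the
normalised restriction of Lebesgue measure.
-/

namespace Real

theorem rpow_add_le_mul_rpow_add_rpow {a b p : ℝ} (ha : 0 ≤ a) (hb : 0 ≤ b) (hp : 1 ≤ p) :
    (a + b) ^ p ≤ 2 ^ (p - 1) * (a ^ p + b ^ p) := by
  lift a to NNReal using ha
  lift b to NNReal using hb
  exact_mod_cast NNReal.rpow_add_le_mul_rpow_add_rpow a b hp

theorem rpow_sub_two_mul_sq_le_rpow {a t : ℝ} (p : ℝ) (ht : 0 ≤ t) (hta : t ≤ a) :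
    a ^ (p - 2) * t ^ 2 ≤ a ^ p := by
  obtain rfl | ha := (ht.trans hta).eq_or_lt
  · obtain rfl : t = 0 := le_antisymm hta ht
    simp [zero_rpow_nonneg]
  calc a ^ (p - 2) * t ^ 2 ≤ a ^ (p - 2) * a ^ (2 : ℝ) := by
        rw [rpow_two]; gcongr
    _ = a ^ p := by rw [← rpow_add ha, sub_add_cancel]

theorem rpow_eq_rpow_sub_two_mul_sq_rpow_mul_rpow_rpow {a t : ℝ} (p : ℝ) (ht : 0 ≤ t)
    (hta : t ≤ a) : t ^ p = (a ^ (p - 2) * t ^ 2) ^ (p / 2) * (a ^ p) ^ ((2 - p) / 2) := by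
  obtain rfl | ha := (ht.trans hta).eq_or_lt
  · obtain rfl : t = 0 := le_antisymm hta ht
    obtain rfl | hp := eq_or_ne p 0
    · simp
    · simp [zero_rpow hp, zero_rpow (div_ne_zero hp two_ne_zero)]
  have ht2 : (2 : ℕ) * (p / 2) = p := by push_cast; ring
  have ha0 : (p - 2) * (p / 2) + p * ((2 - p) / 2) = 0 := by ring
  rw [mul_rpow (by positivity) (by positivity), ← rpow_natCast, ← rpow_mul ht, ht2,
    ← rpow_mul ha.le, ← rpow_mul ha.le, mul_right_comm, ← rpow_add ha, ha0, rpow_zero,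
    one_mul]

theorem le_of_le_mul_rpow_add_self {A G S K p : ℝ} (hA : 0 ≤ A) (hG : 0 ≤ G) (hS : 0 ≤ S)
    (hK : 0 ≤ K) (hp0 : 0 < p) (hp2 : p ≤ 2)
    (h : A ≤ K * G ^ (p / 2) * (S + A) ^ ((2 - p) / 2)) :
    A ≤ ((2 * K) ^ (2 / p) + 2 * K) * G
      + ((2 * K) ^ (2 / p) + 2 * K) * G ^ (p / 2) * S ^ ((2 - p) / 2) := by
  set θ := (2 - p) / 2
  have hθ : p / 2 + θ = 1 := by ring
  have hinv : p / 2 * (2 / p) = 1 := by field_simp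
  have hsplit : A ≤ K * G ^ (p / 2) * S ^ θ + K * G ^ (p / 2) * A ^ θ := by
    rw [← mul_add]
    exact h.trans (by gcongr; exact rpow_add_le_add_rpow hS hA (by linarith) (by linarith))
  have hGS : 0 ≤ G ^ (p / 2) * S ^ θ := by positivity
  have hC : 0 ≤ (2 * K) ^ (2 / p) := by positivity
  rcases le_total (K * G ^ (p / 2) * A ^ θ) (K * G ^ (p / 2) * S ^ θ) with hle | hle
  · nlinarith
  · suffices A ≤ (2 * K) ^ (2 / p) * G by nlinarith
    obtain rfl | hA := hA.eq_or_lt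
    · positivity
    have hcancel : A ^ (p / 2) ≤ 2 * K * G ^ (p / 2) := by
      refine le_of_mul_le_mul_right ?_ (rpow_pos_of_pos hA θ)
      rw [← rpow_add hA, hθ, rpow_one]
      linarith
    calc A = (A ^ (p / 2)) ^ (2 / p) := by rw [← rpow_mul hA.le, hinv, rpow_one]
      _ ≤ (2 * K * G ^ (p / 2)) ^ (2 / p) := by gcongr
      _ = (2 * K) ^ (2 / p) * G := by
        rw [mul_rpow (by positivity) (by positivity), ← rpow_mul hG, hinv, rpow_one]

end Real

theorem norm_add_norm_rpow_le_mul_norm_rpow_add_norm_sub_rpow {E : Type*}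
    [SeminormedAddCommGroup E] {p : ℝ} (hp : 1 ≤ p) (x y : E) :
    (‖x‖ + ‖y‖) ^ p ≤ 2 ^ (2 * p - 1) * (‖x‖ ^ p + ‖x - y‖ ^ p) := by
  have hy : ‖y‖ ≤ ‖x‖ + ‖x - y‖ := by simpa using norm_sub_le x (x - y)
  have hsum : ‖x‖ + ‖y‖ ≤ 2 * (‖x‖ + ‖x - y‖) := by
    linarith [norm_nonneg x, norm_nonneg (x - y)]
  calc (‖x‖ + ‖y‖) ^ p ≤ (2 * (‖x‖ + ‖x - y‖)) ^ p := by gcongr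
    _ = 2 ^ p * (‖x‖ + ‖x - y‖) ^ p := Real.mul_rpow zero_le_two (by positivity)
    _ ≤ 2 ^ p * (2 ^ (p - 1) * (‖x‖ ^ p + ‖x - y‖ ^ p)) := by
      gcongr; exact Real.rpow_add_le_mul_rpow_add_rpow (norm_nonneg _) (norm_nonneg _) hp
    _ = 2 ^ (2 * p - 1) * (‖x‖ ^ p + ‖x - y‖ ^ p) := by
      rw [← mul_assoc, ← Real.rpow_add zero_lt_two]; ring_nf

-- `K = c ^ ((2 - p) / 2)`, where `c = 2 ^ (2p - 1)` is the constant of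
-- `norm_add_norm_rpow_le_mul_norm_rpow_add_norm_sub_rpow`
def interpolationConst (p : ℝ) : ℝ :=
  let K : ℝ := (2 ^ (2 * p - 1)) ^ ((2 - p) / 2)
  (2 * K) ^ (2 / p) + 2 * K

theorem interpolationConst_pos (p : ℝ) : 0 < interpolationConst p := by
  unfold interpolationConst; positivity

section

variable {α : Type*} [MeasurableSpace α] {μ : Measure α}

theorem integral_rpow_mul_rpow_le {f g : α → ℝ} (hf0 : 0 ≤ᵐ[μ] f) (hg0 : 0 ≤ᵐ[μ] g)
    (hf : Integrable f μ) (hg : Integrable g μ) {a b : ℝ} (ha : 0 ≤ a) (hb : 0 ≤ b)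
    (hab : a + b = 1) :
    ∫ x, f x ^ a * g x ^ b ∂μ ≤ (∫ x, f x ∂μ) ^ a * (∫ x, g x ∂μ) ^ b := by
  have hfg0 : 0 ≤ᵐ[μ] fun x => f x ^ a * g x ^ b := by
    filter_upwards [hf0, hg0] with x hfx hgx
    exact mul_nonneg (Real.rpow_nonneg hfx a) (Real.rpow_nonneg hgx b)
  have hfg : AEStronglyMeasurable (fun x => f x ^ a * g x ^ b) μ :=
    ((hf.1.aemeasurable.pow_const a).mul (hg.1.aemeasurable.pow_const b)).aestronglyMeasurable
  rw [integral_eq_lintegral_of_nonneg_ae hfg0 hfg, integral_eq_lintegral_of_nonneg_ae hf0 hf.1,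
    integral_eq_lintegral_of_nonneg_ae hg0 hg.1, ENNReal.toReal_rpow, ENNReal.toReal_rpow,
    ← ENNReal.toReal_mul]
  refine ENNReal.toReal_mono ?_ ((lintegral_congr_ae ?_).trans_le
    (ENNReal.lintegral_mul_norm_pow_le hf.1.aemeasurable.ennreal_ofReal
      hg.1.aemeasurable.ennreal_ofReal ha hb hab))
  · exact ENNReal.mul_ne_top (ENNReal.rpow_ne_top_of_nonneg ha hf.lintegral_lt_top.ne)
      (ENNReal.rpow_ne_top_of_nonneg hb hg.lintegral_lt_top.ne)
  · filter_upwards [hf0, hg0] with x hfx hgx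
    rw [ENNReal.ofReal_mul (Real.rpow_nonneg hfx a), ENNReal.ofReal_rpow_of_nonneg hfx ha,
      ENNReal.ofReal_rpow_of_nonneg hgx hb]

theorem integral_norm_sub_rpow_le {E : Type*} [SeminormedAddCommGroup E] {p : ℝ}
    (hp1 : 1 ≤ p) (hp2 : p ≤ 2) {X Y : α → E}
    (hX : AEStronglyMeasurable X μ) (hY : AEStronglyMeasurable Y μ)
    (hXi : Integrable (fun x => ‖X x‖ ^ p) μ) (hYi : Integrable (fun x => ‖Y x‖ ^ p) μ) :
    ∫ x, ‖X x - Y x‖ ^ p ∂μ ≤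
      interpolationConst p * ∫ x, (‖X x‖ + ‖Y x‖) ^ (p - 2) * ‖X x - Y x‖ ^ 2 ∂μ
        + interpolationConst p
          * (∫ x, (‖X x‖ + ‖Y x‖) ^ (p - 2) * ‖X x - Y x‖ ^ 2 ∂μ) ^ (p / 2)
          * (∫ x, ‖X x‖ ^ p ∂μ) ^ ((2 - p) / 2) := by
  have hsum_meas : AEMeasurable (fun x => ‖X x‖ + ‖Y x‖) μ :=
    (hX.norm.add hY.norm).aemeasurable
  have hdiff_meas : AEMeasurable (fun x => ‖X x - Y x‖) μ := (hX.sub hY).norm.aemeasurable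
  have hsum : Integrable (fun x => (‖X x‖ + ‖Y x‖) ^ p) μ := by
    refine ((hXi.add hYi).const_mul (2 ^ (p - 1))).mono'
      (hsum_meas.pow_const p).aestronglyMeasurable (ae_of_all _ fun x => ?_)
    rw [Real.norm_of_nonneg (by positivity)]
    exact Real.rpow_add_le_mul_rpow_add_rpow (norm_nonneg _) (norm_nonneg _) hp1
  have hdiff : Integrable (fun x => ‖X x - Y x‖ ^ p) μ := by
    refine hsum.mono' (hdiff_meas.pow_const p).aestronglyMeasurable (ae_of_all _ fun x => ?_)
    rw [Real.norm_of_nonneg (by positivity)]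
    gcongr
    exact norm_sub_le _ _
  have hweighted :
      Integrable (fun x => (‖X x‖ + ‖Y x‖) ^ (p - 2) * ‖X x - Y x‖ ^ 2) μ := by
    refine hsum.mono' ((hsum_meas.pow_const _).mul (hdiff_meas.pow_const 2)).aestronglyMeasurable
      (ae_of_all _ fun x => ?_)
    rw [Real.norm_of_nonneg (by positivity)]
    exact Real.rpow_sub_two_mul_sq_le_rpow p (norm_nonneg _) (norm_sub_le _ _)
  have holder : ∫ x, ‖X x - Y x‖ ^ p ∂μ ≤
      (∫ x, (‖X x‖ + ‖Y x‖) ^ (p - 2) * ‖X x - Y x‖ ^ 2 ∂μ) ^ (p / 2)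
        * (∫ x, (‖X x‖ + ‖Y x‖) ^ p ∂μ) ^ ((2 - p) / 2) := by
    rw [integral_congr_ae (ae_of_all _ fun x => Real.rpow_eq_rpow_sub_two_mul_sq_rpow_mul_rpow_rpow
      p (norm_nonneg _) (norm_sub_le (X x) (Y x)))]
    exact integral_rpow_mul_rpow_le (ae_of_all _ fun x => by positivity)
      (ae_of_all _ fun x => by positivity) hweighted hsum (by linarith) (by linarith) (by ring)
  have hsum_le : ∫ x, (‖X x‖ + ‖Y x‖) ^ p ∂μ
      ≤ 2 ^ (2 * p - 1) * (∫ x, ‖X x‖ ^ p ∂μ + ∫ x, ‖X x - Y x‖ ^ p ∂μ) := by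
    rw [← integral_add hXi hdiff, ← integral_const_mul]
    exact integral_mono hsum ((hXi.add hdiff).const_mul _)
      fun x => norm_add_norm_rpow_le_mul_norm_rpow_add_norm_sub_rpow hp1 (X x) (Y x)
  refine Real.le_of_le_mul_rpow_add_self (integral_nonneg fun x => by positivity)
    (integral_nonneg fun x => by positivity) (integral_nonneg fun x => by positivity)
    (by positivity) (by linarith) hp2 (holder.trans ?_)
  rw [mul_comm _ (_ ^ (p / 2)), mul_assoc, ← Real.mul_rpow (by positivity) (by positivity)]
  exact mul_le_mul_of_nonneg_left
    (Real.rpow_le_rpow (integral_nonneg fun x => by positivity) hsum_le (by linarith))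
    (by positivity)

end

/-- Integral interpolation inequality (equation (3.5) in the proof of Lemma 3.1).
Note that with the real power `(·) ^ (p-2)` (`Real.rpow`) one has `0 ^ (p-2) = 0`
for `p ≠ 2`, so the convention that `(|X|+|Y|)^{p-2}|X-Y|² = 0` at points where
`X = Y = 0` holds automatically. The constant `C` depends only on `p`. -/
theorem integral_interpolation (p : ℝ) (hp1 : 1 < p) (hp2 : p < 2) :
    ∃ C > (0 : ℝ), ∀ n : ℕ, 2 ≤ n → ∀ (x₀ : Euc n) (r : ℝ), 0 < r →
      ∀ X Y : Euc n → Euc n, Measurable X → Measurable Y →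
        IntegrableOn (fun x => ‖X x‖ ^ p) (ball x₀ r) →
        IntegrableOn (fun x => ‖Y x‖ ^ p) (ball x₀ r) →
        ⨍ x in ball x₀ r, ‖X x - Y x‖ ^ p ≤
          C * (⨍ x in ball x₀ r, (‖X x‖ + ‖Y x‖) ^ (p - 2) * ‖X x - Y x‖ ^ 2)
            + C * (⨍ x in ball x₀ r, (‖X x‖ + ‖Y x‖) ^ (p - 2) * ‖X x - Y x‖ ^ 2) ^ (p / 2)
              * (⨍ x in ball x₀ r, ‖X x‖ ^ p) ^ ((2 - p) / 2) := by
  refine ⟨interpolationConst p, interpolationConst_pos p, ?_⟩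
  intro n _ x₀ r hr X Y hX hY hXi hYi
  have hball : (volume (ball x₀ r))⁻¹ ≠ ⊤ :=
    ENNReal.inv_ne_top.2 (measure_ball_pos volume x₀ hr).ne'
  simp only [setAverage_eq']
  exact integral_norm_sub_rpow_le hp1.le hp2.le hX.aestronglyMeasurable hY.aestronglyMeasurable
    (hXi.smul_measure hball) (hYi.smul_measure hball)
end
end
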